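/- (Proposition 2, second moment of the price-increment variable.) Suppose k_+ = k_− = 0. Then the stationary flip probability, i.e. the asymptotic second moment of X = |ΔN^+| ∈ {0,1}, satisfies Σ_{i=0}^{N} π(i)·[ (i/N)·(1 − P_++(i)) + ((N−i)/N)·(1 − P_−−(i)) ] = 1 − (2/N)·Σ_{i=0}^{N} i·π(i)·P_++(i). -/

import Mathlib

/-!
Detailed balance of the birth–death chain of `N⁺` turns the up-flux
`Σ (N−i) π(i) (1 − P₋₋(i))` into the down-flux `Σ i π(i) (1 − P₊₊(i))`, so the flip probability is
`(2/N) Σ i π(i) (1 − P₊₊(i))`. Exchanging the two spin values gives `P₋₋(N−i) = P₊₊(i)`, whence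
`g(ℓ) = C(N,ℓ) F(N) / (F(ℓ) F(N−ℓ))` with `F(ℓ) = ∏_{k=1}^{ℓ} (1 − P₊₊(k))`. So `π` is symmetric
under `ℓ ↦ N − ℓ`, its mean is `N/2`, and the identity follows.
-/

open Finset

/-- Binomial coefficient `C(n,k)` for integers, with `C(n,k) = 0` if `k < 0` or `k > n`. -/
noncomputable def ch (n k : ℤ) : ℝ :=
  if 0 ≤ k ∧ k ≤ n then (n.toNat).choose k.toNat else 0

/-- `c(i) = ⌈α·|i/N − 1/2|⌉`. -/
noncomputable def cc (N : ℕ) (α : ℝ) (i : ℤ) : ℤ :=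
  ⌈α * |(i : ℝ) / (N : ℝ) - 1 / 2|⌉

/-- `f₊(i,j) = C(i−1,j)·C(N−i,2d−j)/C(N−1,2d)`. -/
noncomputable def fplus (N d : ℕ) (i j : ℤ) : ℝ :=
  ch (i - 1) j * ch ((N : ℤ) - i) (2 * (d : ℤ) - j) / ch ((N : ℤ) - 1) (2 * (d : ℤ))

/-- `f₋(i,j) = C(i,j)·C(N−i−1,2d−j)/C(N−1,2d)`. -/
noncomputable def fminus (N d : ℕ) (i j : ℤ) : ℝ :=
  ch i j * ch ((N : ℤ) - i - 1) (2 * (d : ℤ) - j) / ch ((N : ℤ) - 1) (2 * (d : ℤ))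

/-- `P₊₊(i)`: frozen-phase non-flip probability of a `+1` spin when `N⁺ = i`. -/
noncomputable def Ppp (N d : ℕ) (α : ℝ) (i : ℤ) : ℝ :=
  if (N : ℝ) * (1 / 2 - (d : ℝ) / α) ≤ (i : ℝ) ∧ (i : ℝ) ≤ (N : ℝ) * (1 / 2 + (d : ℝ) / α) then
    ∑ j ∈ Finset.Icc (max ((d : ℤ) + cc N α i) (i + 2 * (d : ℤ) - (N : ℤ)))
        (min (2 * (d : ℤ)) i), fplus N d i j
  else 0

/-- `P₋₋(i)`: frozen-phase non-flip probability of a `−1` spin when `N⁺ = i`. -/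
noncomputable def Pmm (N d : ℕ) (α : ℝ) (i : ℤ) : ℝ :=
  if (N : ℝ) * (1 / 2 - (d : ℝ) / α) ≤ (i : ℝ) ∧ (i : ℝ) ≤ (N : ℝ) * (1 / 2 + (d : ℝ) / α) then
    ∑ j ∈ Finset.Icc (max 0 (i + 2 * (d : ℤ) - (N : ℤ)))
        (min ((d : ℤ) - cc N α i) i), fminus N d i j
  else 0

/-- `g(ℓ) = C(M,ℓ)·Π_{j=0}^{ℓ−1} (1 − P₋₋(k₊+j))/(1 − P₊₊(k₊+j+1))`, with `g(0) = 1`. -/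
noncomputable def g (N d : ℕ) (α : ℝ) (kp M : ℕ) (ℓ : ℕ) : ℝ :=
  (M.choose ℓ : ℝ) * ∏ j ∈ Finset.range ℓ,
    (1 - Pmm N d α ((kp + j : ℕ) : ℤ)) / (1 - Ppp N d α ((kp + j + 1 : ℕ) : ℤ))

/-- `Z = Σ_{ℓ=1}^{M} g(ℓ)`. -/
noncomputable def Zc (N d : ℕ) (α : ℝ) (kp M : ℕ) : ℝ :=
  ∑ ℓ ∈ Finset.Icc 1 M, g N d α kp M ℓ

/-- The stationary probabilities `π(ℓ) = g(ℓ)/(1+Z)`. -/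
noncomputable def pii (N d : ℕ) (α : ℝ) (kp M : ℕ) (ℓ : ℕ) : ℝ :=
  g N d α kp M ℓ / (1 + Zc N d α kp M)

/-- `Q(ℓ,ℓ+1) = ((M−ℓ)/N)·(1 − P₋₋(k₊+ℓ))` (equal to `0` when `ℓ ≥ M`). -/
noncomputable def Qup (N d : ℕ) (α : ℝ) (kp M : ℕ) (ℓ : ℕ) : ℝ :=
  (((M : ℝ) - (ℓ : ℝ)) / (N : ℝ)) * (1 - Pmm N d α ((kp + ℓ : ℕ) : ℤ))

/-- `Q(ℓ,ℓ−1) = (ℓ/N)·(1 − P₊₊(k₊+ℓ))` (equal to `0` when `ℓ = 0`). -/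
noncomputable def Qdown (N d : ℕ) (α : ℝ) (kp M : ℕ) (ℓ : ℕ) : ℝ :=
  ((ℓ : ℝ) / (N : ℝ)) * (1 - Ppp N d α ((kp + ℓ : ℕ) : ℤ))

/-- The frozen-phase transition matrix `Q` on `{0,…,M}`. -/
noncomputable def Q (N d : ℕ) (α : ℝ) (kp M : ℕ) (ℓ m : ℕ) : ℝ :=
  if m = ℓ + 1 then Qup N d α kp M ℓ
  else if m + 1 = ℓ then Qdown N d α kp M ℓ
  else if m = ℓ then 1 - Qup N d α kp M ℓ - Qdown N d α kp M ℓ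
  else 0

theorem Finset.sum_Icc_int_const_sub {M : Type*} [AddCommMonoid M] (f : ℤ → M) (a b c : ℤ) :
    ∑ j ∈ Icc a b, f (c - j) = ∑ j ∈ Icc (c - b) (c - a), f j := by
  apply sum_nbij' (c - ·) (c - ·) <;> intro j hj <;> simp_all only [mem_Icc] <;> omega

theorem cc_natCast_sub (N : ℕ) (α : ℝ) (i : ℤ) : cc N α (N - i) = cc N α i := by
  unfold cc
  rcases eq_or_ne (N : ℝ) 0 with hN | hN
  · simp [hN]
  · rw [show (((N : ℤ) - i : ℤ) : ℝ) / N - 1 / 2 = -((i : ℝ) / N - 1 / 2) by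
      push_cast; field_simp; ring, abs_neg]

theorem fplus_eq_fminus (N d : ℕ) (i j : ℤ) :
    fplus N d i j = fminus N d (N - i) (2 * d - j) := by
  unfold fplus fminus
  rw [show (N : ℤ) - (N - i) - 1 = i - 1 by ring, show 2 * (d : ℤ) - (2 * d - j) = j by ring]
  ring

theorem Pmm_natCast_sub (N d : ℕ) (α : ℝ) (i : ℤ) : Pmm N d α (N - i) = Ppp N d α i := by
  unfold Pmm Ppp
  refine if_congr ?_ ?_ rfl
  · push_cast
    constructor <;> rintro ⟨h₁, h₂⟩ <;> constructor <;> linarith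
  · simp_rw [cc_natCast_sub, fplus_eq_fminus N d i, sum_Icc_int_const_sub (fminus N d (N - i))]
    congr 2 <;> omega

theorem Pmm_natCast {N : ℕ} (d : ℕ) (α : ℝ) {j : ℕ} (hj : j ≤ N) :
    Pmm N d α j = Ppp N d α ↑(N - j) := by
  rw [← Pmm_natCast_sub]
  congr 1
  omega

noncomputable def flipProd (N d : ℕ) (α : ℝ) (ℓ : ℕ) : ℝ :=
  ∏ j ∈ range ℓ, (1 - Ppp N d α ↑(j + 1))

theorem prod_one_sub_Pmm_mul_flipProd (N d : ℕ) (α : ℝ) {ℓ m : ℕ} (h : ℓ + m = N) :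
    (∏ j ∈ range ℓ, (1 - Pmm N d α j)) * flipProd N d α m = flipProd N d α N := by
  rw [flipProd, flipProd, ← h, add_comm ℓ, prod_range_add, mul_comm,
    ← prod_range_reflect _ ℓ]
  congr 1
  refine prod_congr rfl fun j hj => ?_
  rw [mem_range] at hj
  rw [Pmm_natCast d α (by omega : ℓ - 1 - j ≤ m + ℓ)]
  congr 3
  omega

section FrozenPhaseWeights

variable {N d : ℕ} {α : ℝ} (hPpp : ∀ i : ℕ, 1 ≤ i → i ≤ N → Ppp N d α (i : ℤ) < 1)
include hPpp

theorem flipProd_pos {ℓ : ℕ} (hℓ : ℓ ≤ N) : 0 < flipProd N d α ℓ :=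
  prod_pos fun j hj => sub_pos.2 (hPpp _ (by omega) (by simp at hj; omega))

theorem g_eq_choose_mul_flipProd {ℓ : ℕ} (hℓ : ℓ ≤ N) :
    g N d α 0 N ℓ =
      N.choose ℓ * flipProd N d α N / (flipProd N d α ℓ * flipProd N d α (N - ℓ)) := by
  have hm := (flipProd_pos hPpp (N.sub_le ℓ)).ne'
  rw [g, prod_div_distrib, ← prod_one_sub_Pmm_mul_flipProd N d α (Nat.add_sub_cancel' hℓ)]
  simp only [zero_add, flipProd] at hm ⊢
  field_simp

theorem g_pos {ℓ : ℕ} (hℓ : ℓ ≤ N) : 0 < g N d α 0 N ℓ := by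
  rw [g_eq_choose_mul_flipProd hPpp hℓ]
  have := flipProd_pos hPpp (le_refl N)
  have := flipProd_pos hPpp hℓ
  have := flipProd_pos hPpp (N.sub_le ℓ)
  have : (0 : ℝ) < N.choose ℓ := by exact_mod_cast Nat.choose_pos hℓ
  positivity

theorem g_symm {ℓ : ℕ} (hℓ : ℓ ≤ N) : g N d α 0 N (N - ℓ) = g N d α 0 N ℓ := by
  rw [g_eq_choose_mul_flipProd hPpp hℓ, g_eq_choose_mul_flipProd hPpp (N.sub_le ℓ),
    Nat.choose_symm hℓ, Nat.sub_sub_self hℓ, mul_comm (flipProd N d α (N - ℓ))]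

theorem g_succ_balance {ℓ : ℕ} (hℓ : ℓ < N) :
    g N d α 0 N (ℓ + 1) * (ℓ + 1) * (1 - Ppp N d α ↑(ℓ + 1)) =
      g N d α 0 N ℓ * (N - ℓ) * (1 - Pmm N d α ℓ) := by
  have hb : 1 - Ppp N d α ↑(ℓ + 1) ≠ 0 := (sub_pos.2 (hPpp _ (by omega) hℓ)).ne'
  have hchoose : (N.choose (ℓ + 1) : ℝ) * (ℓ + 1) = N.choose ℓ * (N - ℓ) := by
    rw [← Nat.cast_sub hℓ.le]
    exact_mod_cast Nat.choose_succ_right_eq N ℓ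
  simp only [g, prod_range_succ, zero_add]
  field_simp
  linear_combination (∏ j ∈ range ℓ, (1 - Pmm N d α ↑j) / (1 - Ppp N d α ↑(j + 1))) *
    (1 - Pmm N d α ℓ) * hchoose

end FrozenPhaseWeights

theorem Finset.sum_range_succ_eq_of_shift {M : Type*} [AddCommMonoid M] {N : ℕ} {u v : ℕ → M}
    (hu : u N = 0) (hv : v 0 = 0) (h : ∀ ℓ < N, v (ℓ + 1) = u ℓ) :
    ∑ i ∈ range (N + 1), u i = ∑ i ∈ range (N + 1), v i := by
  rw [sum_range_succ, hu, sum_range_succ', hv, add_zero, add_zero]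
  exact sum_congr rfl fun ℓ hℓ => (h ℓ (mem_range.1 hℓ)).symm

theorem two_mul_sum_range_mul_eq_of_symm {N : ℕ} {w : ℕ → ℝ} (h : ∀ ℓ ≤ N, w (N - ℓ) = w ℓ) :
    2 * ∑ i ∈ range (N + 1), i * w i = N * ∑ i ∈ range (N + 1), w i := by
  have hreflect : ∑ i ∈ range (N + 1), i * w i = ∑ i ∈ range (N + 1), (N - i) * w i := by
    rw [← sum_range_reflect]
    refine sum_congr rfl fun i hi => ?_
    have hi : i ≤ N := Nat.lt_succ_iff.1 (mem_range.1 hi)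
    rw [Nat.add_sub_cancel, h i hi, Nat.cast_sub hi]
  rw [two_mul]
  nth_rw 2 [hreflect]
  rw [← sum_add_distrib, mul_sum]
  exact sum_congr rfl fun i _ => by ring

/-- `w` are unnormalized stationary weights of the birth–death chain on `{0,…,N}` that moves
down from `i` with probability `(i/N)(1 − p i)` and up with probability `((N−i)/N)(1 − q i)`. -/
theorem sum_stationary_move_prob_eq {N : ℕ} (hN : N ≠ 0) {w p q : ℕ → ℝ}
    (hw : ∑ i ∈ range (N + 1), w i ≠ 0)
    (hbalance : ∀ ℓ < N, w (ℓ + 1) * (ℓ + 1) * (1 - p (ℓ + 1)) = w ℓ * (N - ℓ) * (1 - q ℓ))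
    (hsymm : ∀ ℓ ≤ N, w (N - ℓ) = w ℓ) :
    ∑ i ∈ range (N + 1), w i / (∑ k ∈ range (N + 1), w k) *
        ((i / N) * (1 - p i) + ((N - i) / N) * (1 - q i)) =
      1 - (2 / N) * ∑ i ∈ range (N + 1), i * (w i / ∑ k ∈ range (N + 1), w k) * p i := by
  have hmean := two_mul_sum_range_mul_eq_of_symm hsymm
  set T := ∑ k ∈ range (N + 1), w k
  have hflux : ∑ i ∈ range (N + 1), (N - i) * w i * (1 - q i) =
      ∑ i ∈ range (N + 1), i * w i * (1 - p i) :=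
    sum_range_succ_eq_of_shift (by simp) (by simp) fun ℓ hℓ => by
      push_cast
      linear_combination hbalance ℓ hℓ
  have hN' : (N : ℝ) ≠ 0 := Nat.cast_ne_zero.2 hN
  calc ∑ i ∈ range (N + 1), w i / T * ((i / N) * (1 - p i) + ((N - i) / N) * (1 - q i))
      = (∑ i ∈ range (N + 1), i * w i * (1 - p i) +
          ∑ i ∈ range (N + 1), (N - i) * w i * (1 - q i)) / (N * T) := by
        rw [← sum_add_distrib, sum_div]
        exact sum_congr rfl fun i _ => by field_simp
    _ = 2 * (∑ i ∈ range (N + 1), i * w i - ∑ i ∈ range (N + 1), i * w i * p i) / (N * T) := by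
        rw [hflux, ← sum_sub_distrib]
        congr 1
        rw [← two_mul]
        exact congrArg _ (sum_congr rfl fun i _ => by ring)
    _ = 1 - (2 / N) * ∑ i ∈ range (N + 1), i * (w i / T) * p i := by
        have hS : ∑ i ∈ range (N + 1), i * (w i / T) * p i =
            (∑ i ∈ range (N + 1), i * w i * p i) / T := by
          rw [sum_div]
          exact sum_congr rfl fun i _ => by ring
        rw [hS]
        field_simp
        linear_combination hmean

theorem stmt11_general (N d : ℕ) (hN : 2 * d < N) (α : ℝ)
    (hPpp : ∀ i : ℕ, 1 ≤ i → i ≤ N → Ppp N d α (i : ℤ) < 1) :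
    ∑ i ∈ Finset.range (N + 1), pii N d α 0 N i *
        (((i : ℝ) / (N : ℝ)) * (1 - Ppp N d α (i : ℤ)) +
          (((N : ℝ) - (i : ℝ)) / (N : ℝ)) * (1 - Pmm N d α (i : ℤ))) =
      1 - (2 / (N : ℝ)) *
        ∑ i ∈ Finset.range (N + 1), (i : ℝ) * pii N d α 0 N i * Ppp N d α (i : ℤ) := by
  have hmass : 1 + Zc N d α 0 N = ∑ i ∈ range (N + 1), g N d α 0 N i := by
    rw [range_eq_Ico, sum_eq_sum_Ico_succ_bot (Nat.add_one_pos N), zero_add,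
      Ico_add_one_right_eq_Icc, Zc]
    simp [g]
  have hmass_pos : 0 < ∑ i ∈ range (N + 1), g N d α 0 N i :=
    sum_pos (fun i hi => g_pos hPpp (Nat.lt_succ_iff.1 (mem_range.1 hi))) nonempty_range_add_one
  simp only [pii, hmass]
  exact sum_stationary_move_prob_eq (by omega) hmass_pos.ne'
    (fun ℓ hℓ => by exact_mod_cast g_succ_balance hPpp hℓ) fun ℓ hℓ => g_symm hPpp hℓ

/-- Proposition 2, second moment of the price-increment variable `X = |ΔN⁺| ∈ {0,1}`
(for `k₊ = k₋ = 0`): the stationary flip probability satisfies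
`Σ_{i=0}^{N} π(i)·[(i/N)(1 − P₊₊(i)) + ((N−i)/N)(1 − P₋₋(i))] = 1 − (2/N)·Σ_{i=0}^{N} i·π(i)·P₊₊(i)`. -/
theorem stmt11 (N d : ℕ) (hd : 1 ≤ d) (hN : 2 * d < N) (α : ℝ) (hα : 0 < α)
    (hPpp : ∀ i : ℕ, 1 ≤ i → i ≤ N → Ppp N d α (i : ℤ) < 1) :
    ∑ i ∈ Finset.range (N + 1), pii N d α 0 N i *
        (((i : ℝ) / (N : ℝ)) * (1 - Ppp N d α (i : ℤ)) +
          (((N : ℝ) - (i : ℝ)) / (N : ℝ)) * (1 - Pmm N d α (i : ℤ))) =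
      1 - (2 / (N : ℝ)) *
        ∑ i ∈ Finset.range (N + 1), (i : ℝ) * pii N d α 0 N i * Ppp N d α (i : ℤ) :=
  stmt11_general N d hN α hPpp
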